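/- Let u, v, w ∈ ℝⁿ with u ≥ 0 componentwise, v, w > 0 componentwise, and v_i, w_i ∈ [α, β], u_i ∈ [α, β] for all i with α > 0. Then D(u, w) − D(u, v) ≤ (1/α)·‖u − w‖₂ · ‖v − w‖₂, where D is the generalized KL divergence; in particular, the difference of KL divergences to two nearby second arguments is controlled by the ℓ₂ distance of those arguments. -/

import Mathlib

/-! Writing `D(u, w) - D(u, v) = ∑ᵢ (uᵢ log (vᵢ / wᵢ) + wᵢ - vᵢ)` and using `log x ≤ x - 1`, each
summand is at most `(uᵢ - wᵢ)(vᵢ - wᵢ) / wᵢ ≤ |uᵢ - wᵢ| |vᵢ - wᵢ| / α`; Cauchy–Schwarz then bounds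
the sum by `‖u - w‖ ‖v - w‖ / α`. -/

noncomputable def KL {n : ℕ} (u v : EuclideanSpace ℝ (Fin n)) : ℝ :=
  ∑ i, u i * Real.log (u i / v i) - ∑ i, u i + ∑ i, v i

open Real Finset

theorem EuclideanSpace.sum_abs_mul_abs_le_norm_mul_norm {ι : Type*} [Fintype ι]
    (x y : EuclideanSpace ℝ ι) : ∑ i, |x i| * |y i| ≤ ‖x‖ * ‖y‖ := by
  simpa only [EuclideanSpace.norm_eq, norm_eq_abs] using
    sum_mul_le_sqrt_mul_sqrt univ (fun i ↦ |x i|) (fun i ↦ |y i|)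

theorem mul_log_div_sub_mul_log_div (a : ℝ) {b c : ℝ} (hb : b ≠ 0) (hc : c ≠ 0) :
    a * log (a / c) - a * log (a / b) = a * log (b / c) := by
  rcases eq_or_ne a 0 with rfl | ha
  · simp
  · rw [log_div ha hc, log_div ha hb, log_div hb hc]
    ring

theorem KL_sub_KL {n : ℕ} (u : EuclideanSpace ℝ (Fin n)) {v w : EuclideanSpace ℝ (Fin n)}
    (hv : ∀ i, v i ≠ 0) (hw : ∀ i, w i ≠ 0) :
    KL u w - KL u v = ∑ i, (u i * log (v i / w i) + (w i - v i)) := by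
  simp only [KL, sum_add_distrib, ← mul_log_div_sub_mul_log_div _ (hv _) (hw _), sum_sub_distrib]
  ring

theorem mul_log_div_add_sub_le {a b c : ℝ} (ha : 0 ≤ a) (hb : 0 < b) (hc : 0 < c) :
    a * log (b / c) + (c - b) ≤ (a - c) * (b - c) / c :=
  calc a * log (b / c) + (c - b)
      ≤ a * (b / c - 1) + (c - b) := by
        gcongr
        exact log_le_sub_one_of_pos (div_pos hb hc)
    _ = (a - c) * (b - c) / c := by
        field_simp
        ring

theorem mul_log_div_add_sub_le_abs_mul_abs_div {a b c α : ℝ} (ha : 0 ≤ a) (hb : 0 < b)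
    (hα : 0 < α) (hαc : α ≤ c) :
    a * log (b / c) + (c - b) ≤ 1 / α * (|a - c| * |b - c|) :=
  calc a * log (b / c) + (c - b)
      ≤ (a - c) * (b - c) / c := mul_log_div_add_sub_le ha hb (hα.trans_le hαc)
    _ ≤ |a - c| * |b - c| / α := by
        rw [← abs_mul]
        exact div_le_div₀ (abs_nonneg _) (le_abs_self _) hα hαc
    _ = 1 / α * (|a - c| * |b - c|) := by ring

theorem kl_diff_le_norm_mul_norm_general (n : ℕ) (α β : ℝ) (hα : 0 < α)
    (u v w : EuclideanSpace ℝ (Fin n))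
    (hu : ∀ i, u i ∈ Set.Icc α β) (hv : ∀ i, v i ∈ Set.Icc α β)
    (hw : ∀ i, w i ∈ Set.Icc α β) :
    KL u w - KL u v ≤ (1 / α) * ‖u - w‖ * ‖v - w‖ := by
  have hv_pos i : 0 < v i := hα.trans_le (hv i).1
  have hw_pos i : 0 < w i := hα.trans_le (hw i).1
  rw [KL_sub_KL u (fun i ↦ (hv_pos i).ne') (fun i ↦ (hw_pos i).ne'), mul_assoc]
  calc ∑ i, (u i * log (v i / w i) + (w i - v i))
      ≤ ∑ i, 1 / α * (|u i - w i| * |v i - w i|) := sum_le_sum fun i _ ↦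
        mul_log_div_add_sub_le_abs_mul_abs_div (hα.le.trans (hu i).1) (hv_pos i) hα (hw i).1
    _ ≤ 1 / α * (‖u - w‖ * ‖v - w‖) := by
        rw [← mul_sum]
        gcongr
        exact EuclideanSpace.sum_abs_mul_abs_le_norm_mul_norm (u - w) (v - w)

theorem kl_diff_le_norm_mul_norm (n : ℕ) (α β : ℝ) (hα : 0 < α) (hαβ : α ≤ β)
    (u v w : EuclideanSpace ℝ (Fin n))
    (hu : ∀ i, u i ∈ Set.Icc α β) (hv : ∀ i, v i ∈ Set.Icc α β)
    (hw : ∀ i, w i ∈ Set.Icc α β) :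
    KL u w - KL u v ≤ (1 / α) * ‖u - w‖ * ‖v - w‖ :=
  kl_diff_le_norm_mul_norm_general n α β hα u v w hu hv hw
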